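/- Suppose B is a factor antichain, and for natural numbers n, m let a_m(n) be the number of words of length n over V having exactly m occurrences of B. Let F(s,t) be the formal power series in s over ℤ[t] whose coefficient of s^n is Σ_m a_m(n) t^m, and let C(s,t) be the formal power series in s over ℤ[t] whose coefficient of s^n is the (finite) sum of (t−1)^l over all clusters whose word has length n. Then (1 − d·s − C(s,t)) · F(s,t) = 1 in (ℤ[t])[[s]]. -/

import Mathlib

/-- The finite set of occurrences of a member of `B` in the word `w`. -/
def Occs {V : Type*} [DecidableEq V] (B : Finset (List V)) (w : List V) :
    Finset (ℕ × List V) :=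
  (Finset.range (w.length + 1) ×ˢ B).filter fun p => (w.drop p.1).take p.2.length = p.2

/-- `(i, b)` is an occurrence of a member of `B` in the word `w`. -/
def IsOcc {V : Type*} (B : Finset (List V)) (w : List V) (p : ℕ × List V) : Prop :=
  p.2 ∈ B ∧ (w.drop p.1).take p.2.length = p.2

/-- `(w, L)` is a cluster. -/
def IsCluster {V : Type*} (B : Finset (List V)) (w : List V)
    (L : List (ℕ × List V)) : Prop :=
  L ≠ [] ∧ (∀ p ∈ L, IsOcc B w p) ∧
    (L.map Prod.fst).head? = some 0 ∧
    (L.map fun p => p.1 + p.2.length).getLast? = some w.length ∧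
    L.Chain' fun p q =>
      p.1 < q.1 ∧ p.1 + p.2.length < q.1 + q.2.length ∧ q.1 < p.1 + p.2.length

/-- The number of clusters with word length `n` and exactly `l` occurrences. -/
noncomputable def clusterCount {V : Type*} [Fintype V] (B : Finset (List V))
    (n l : ℕ) : ℕ :=
  Nat.card {q : (Fin n → V) × List (ℕ × List V) //
    IsCluster B (List.ofFn q.1) q.2 ∧ q.2.length = l}

/-- `a_m(n)`: the number of words of length `n` with exactly `m` occurrences of `B`. -/
noncomputable def occCount {V : Type*} [Fintype V] [DecidableEq V]
    (B : Finset (List V)) (n m : ℕ) : ℕ :=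
  Nat.card {f : Fin n → V // (Occs B (List.ofFn f)).card = m}

/-- `F(s,t) ∈ ℤ[t][[s]]`: coefficient of `s^n` is `∑_m a_m(n) t^m` (here
`m ≤ (n+1)·|B|` since there are at most that many occurrences). -/
noncomputable def occGF {V : Type*} [Fintype V] [DecidableEq V]
    (B : Finset (List V)) : PowerSeries (Polynomial ℤ) :=
  PowerSeries.mk fun n =>
    ∑ m ∈ Finset.range ((n + 1) * B.card + 1),
      (occCount B n m : Polynomial ℤ) * Polynomial.X ^ m

/-- `C(s,t) ∈ ℤ[t][[s]]`: coefficient of `s^n` is the sum of `(t-1)^l` over all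
clusters whose word has length `n`. -/
noncomputable def clusterGFT {V : Type*} [Fintype V] (B : Finset (List V)) :
    PowerSeries (Polynomial ℤ) :=
  PowerSeries.mk fun n =>
    ∑ l ∈ Finset.range (n + 1),
      (Polynomial.X - 1 : Polynomial ℤ) ^ l * clusterCount B n l

/-!
Since `t = (t - 1) + 1`, the weight `t ^ (number of occurrences in w)` expands as the sum of
`(t - 1) ^ #S` over all sets `S` of occurrences in `w`, so `F` is the generating function of
*marked words* `(w, S)` counted with weight `(t - 1) ^ #S`. A nonempty marked word either has no
mark at position `0`, and is then a letter followed by a marked word (the term `d s F`), or its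
marks starting from position `0` and overlapping consecutively form a cluster, and cutting the
word right after that cluster leaves an arbitrary marked word (the term `C F`). Hence
`F = 1 + d s F + C F`. The antichain hypothesis makes the cut a bijection: no mark lies inside
another, so marks sorted by start are also sorted by end, the initial overlapping run ends where
its last mark ends, and no later mark starts before that point.
-/

namespace List

variable {α : Type*}

theorem sum_map_pow_length_sublists {R : Type*} [CommSemiring R] (x : R) (l : List α) :
    (l.sublists.map fun t => x ^ t.length).sum = (x + 1) ^ l.length := by
  induction l with
  | nil => simp
  | cons a l ih =>
    rw [((sublists_cons_perm_append a l).map _).sum_eq]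
    simp only [map_append, sum_append, map_map, Function.comp_def, length_cons, pow_succ,
      sum_map_mul_right, ih]
    ring

theorem IsChain.and {R S : α → α → Prop} {l : List α} (hR : l.IsChain R) (hS : l.IsChain S) :
    l.IsChain fun a b => R a b ∧ S a b := by
  rw [isChain_iff_getElem] at *
  exact fun i h => ⟨hR i h, hS i h⟩

theorem Pairwise.eq_or_rel_getLast {r : α → α → Prop} {l : List α} (hl : l.Pairwise r)
    (h : l ≠ []) {a : α} (ha : a ∈ l) : a = l.getLast h ∨ r a (l.getLast h) := by
  rw [← dropLast_append_getLast h] at hl ha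
  rcases mem_append.1 ha with ha | ha
  · exact .inr ((pairwise_append.1 hl).2.2 a ha _ (mem_singleton_self _))
  · exact .inl (mem_singleton.1 ha)

end List

section Occurrences

variable {V : Type*} {B : Finset (List V)} {w : List V} {p q : ℕ × List V}

theorem IsOcc.length_pos (hB : ∀ b ∈ B, b ≠ []) (h : IsOcc B w p) : 0 < p.2.length :=
  List.length_pos_iff.2 (hB _ h.1)

theorem IsOcc.end_le (hB : ∀ b ∈ B, b ≠ []) (h : IsOcc B w p) :
    p.1 + p.2.length ≤ w.length := by
  have hlen := congrArg List.length h.2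
  have := h.length_pos hB
  simp only [List.length_take, List.length_drop] at hlen
  omega

theorem IsOcc.fst_lt (hB : ∀ b ∈ B, b ≠ []) (h : IsOcc B w p) : p.1 < w.length := by
  have := h.end_le hB
  have := h.length_pos hB
  omega

theorem IsOcc.infix_of_le (hp : IsOcc B w p) (hq : IsOcc B w q) (hle : p.1 ≤ q.1)
    (hend : q.1 + q.2.length ≤ p.1 + p.2.length) : q.2 <:+: p.2 := by
  have hq_in_p : (p.2.drop (q.1 - p.1)).take q.2.length = q.2 := by
    rw [← hp.2, List.drop_take, List.drop_drop, List.take_take, Nat.add_sub_cancel' hle,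
      min_eq_left (by omega), hq.2]
  rw [← hq_in_p]
  exact (List.take_prefix _ _).isInfix.trans (List.drop_suffix _ _).isInfix

theorem IsOcc.eq_of_le (hanti : ∀ u ∈ B, ∀ v ∈ B, u <:+: v → u = v)
    (hp : IsOcc B w p) (hq : IsOcc B w q) (hle : p.1 ≤ q.1)
    (hend : q.1 + q.2.length ≤ p.1 + p.2.length) : p = q := by
  have hb : q.2 = p.2 := hanti _ hq.1 _ hp.1 (hp.infix_of_le hq hle hend)
  rw [hb] at hend
  exact Prod.ext (by omega) hb.symm

theorem IsOcc.end_lt_end (hanti : ∀ u ∈ B, ∀ v ∈ B, u <:+: v → u = v)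
    (hp : IsOcc B w p) (hq : IsOcc B w q) (hlt : p.1 < q.1) :
    p.1 + p.2.length < q.1 + q.2.length := by
  by_contra! hend
  have := congrArg Prod.fst (hp.eq_of_le hanti hq hlt.le hend)
  omega

theorem IsOcc.eq_of_fst_eq (hanti : ∀ u ∈ B, ∀ v ∈ B, u <:+: v → u = v)
    (hp : IsOcc B w p) (hq : IsOcc B w q) (h : p.1 = q.1) : p = q := by
  rcases le_total p.2.length q.2.length with hle | hle
  · exact (hq.eq_of_le hanti hp h.ge (by omega)).symm
  · exact hp.eq_of_le hanti hq h.le (by omega)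

theorem IsOcc.take (h : IsOcc B w p) {j : ℕ} (hj : p.1 + p.2.length ≤ j) :
    IsOcc B (w.take j) p := by
  refine ⟨h.1, ?_⟩
  rw [List.drop_take, List.take_take, min_eq_left (by omega), h.2]

theorem IsOcc.drop (h : IsOcc B w p) {j : ℕ} (hj : j ≤ p.1) :
    IsOcc B (w.drop j) (p.1 - j, p.2) := by
  refine ⟨h.1, ?_⟩
  rw [List.drop_drop, Nat.add_sub_cancel' hj, h.2]

theorem IsOcc.append_left (hB : ∀ b ∈ B, b ≠ []) {u : List V} (h : IsOcc B u p) (v : List V) :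
    IsOcc B (u ++ v) p := by
  have := h.end_le hB
  refine ⟨h.1, ?_⟩
  rw [List.drop_append_of_le_length (by omega),
    List.take_append_of_le_length (by rw [List.length_drop]; omega), h.2]

theorem IsOcc.append_right {v : List V} (h : IsOcc B v p) (u : List V) :
    IsOcc B (u ++ v) (p.1 + u.length, p.2) := by
  refine ⟨h.1, ?_⟩
  rw [Nat.add_comm, List.drop_append, List.drop_eq_nil_of_le (by omega), List.nil_append,
    Nat.add_sub_cancel_left, h.2]

theorem mem_occs [DecidableEq V] (hB : ∀ b ∈ B, b ≠ []) : p ∈ Occs B w ↔ IsOcc B w p := by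
  simp only [Occs, IsOcc, Finset.mem_filter, Finset.mem_product, Finset.mem_range]
  exact ⟨fun h => ⟨h.1.2, h.2⟩,
    fun h => ⟨⟨by have := IsOcc.fst_lt hB h; omega, h.1⟩, h.2⟩⟩

end Occurrences

namespace GouldenJackson

open Finset Polynomial

abbrev MarkedWord (V : Type*) := List V × List (ℕ × List V)

/-- A set of occurrences of `B` in `w` (a *marking*), encoded as the list of its members by
strictly increasing position. -/
def IsMarking {V : Type*} (B : Finset (List V)) (w : List V) (L : List (ℕ × List V)) : Prop :=
  (∀ p ∈ L, IsOcc B w p) ∧ L.Pairwise fun p q => p.1 < q.1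

section Markings

variable {V : Type*} {B : Finset (List V)} {w : List V} {L : List (ℕ × List V)}

theorem IsMarking.pairwise_end_lt (hanti : ∀ u ∈ B, ∀ v ∈ B, u <:+: v → u = v)
    (h : IsMarking B w L) : L.Pairwise fun p q => p.1 + p.2.length < q.1 + q.2.length :=
  h.2.imp_of_mem fun hp hq hlt => (h.1 _ hp).end_lt_end hanti (h.1 _ hq) hlt

theorem IsMarking.nodup (h : IsMarking B w L) : L.Nodup :=
  h.2.imp fun hlt heq => by rw [heq] at hlt; exact lt_irrefl _ hlt

theorem IsMarking.length_le (hB : ∀ b ∈ B, b ≠ []) (h : IsMarking B w L) :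
    L.length ≤ w.length := by
  have hsub : L.map Prod.fst ⊆ List.range w.length := fun i hi => by
    obtain ⟨p, hp, rfl⟩ := List.mem_map.1 hi
    exact List.mem_range.2 ((h.1 p hp).fst_lt hB)
  have hnodup : (L.map Prod.fst).Nodup := List.pairwise_map.2 (h.2.imp Nat.ne_of_lt)
  simpa using (List.subperm_of_subset hnodup hsub).length_le

theorem _root_.IsCluster.isMarking (h : IsCluster B w L) : IsMarking B w L :=
  ⟨h.2.1, (h.2.2.2.2.imp fun _ _ h => h.1).pairwise⟩

end Markings

def shiftMarks {V : Type*} (k : ℕ) (L : List (ℕ × List V)) : List (ℕ × List V) :=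
  L.map fun p => (p.1 + k, p.2)

def unshiftMarks {V : Type*} (k : ℕ) (L : List (ℕ × List V)) : List (ℕ × List V) :=
  L.map fun p => (p.1 - k, p.2)

section Shift

variable {V : Type*} {B : Finset (List V)} {L : List (ℕ × List V)}

@[simp]
theorem length_shiftMarks (k : ℕ) : (shiftMarks k L).length = L.length := List.length_map _

@[simp]
theorem length_unshiftMarks (k : ℕ) : (unshiftMarks k L).length = L.length := List.length_map _

@[simp]
theorem unshiftMarks_shiftMarks (k : ℕ) : unshiftMarks k (shiftMarks k L) = L := by
  simp [shiftMarks, unshiftMarks, Function.comp_def]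

theorem shiftMarks_unshiftMarks {k : ℕ} (h : ∀ p ∈ L, k ≤ p.1) :
    shiftMarks k (unshiftMarks k L) = L := by
  rw [shiftMarks, unshiftMarks, List.map_map]
  exact List.map_congr_left (fun p hp => by simp [Nat.sub_add_cancel (h p hp)]) |>.trans
    (List.map_id L)

theorem IsMarking.append (hB : ∀ b ∈ B, b ≠ []) {u v : List V} {K R : List (ℕ × List V)}
    (hK : IsMarking B u K) (hR : IsMarking B v R) :
    IsMarking B (u ++ v) (K ++ shiftMarks u.length R) := by
  refine ⟨fun p hp => ?_, List.pairwise_append.2 ⟨hK.2, ?_, fun p hp q hq => ?_⟩⟩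
  · rcases List.mem_append.1 hp with hp | hp
    · exact (hK.1 p hp).append_left hB v
    · obtain ⟨q, hq, rfl⟩ := List.mem_map.1 hp
      exact (hR.1 q hq).append_right u
  · exact List.pairwise_map.2 (hR.2.imp fun h => by omega)
  · obtain ⟨q, -, rfl⟩ := List.mem_map.1 hq
    have := (hK.1 p hp).fst_lt hB
    simp only
    omega

theorem IsMarking.drop {w : List V} (h : IsMarking B w L) {k : ℕ} (hk : ∀ p ∈ L, k ≤ p.1) :
    IsMarking B (w.drop k) (unshiftMarks k L) := by
  refine ⟨fun p hp => ?_, List.pairwise_map.2 (h.2.imp_of_mem fun hp hq hlt => ?_)⟩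
  · obtain ⟨q, hq, rfl⟩ := List.mem_map.1 hp
    exact (h.1 q hq).drop (hk q hq)
  · have := hk _ hp
    omega

end Shift

section OccList

variable {V : Type*} [DecidableEq V] {B : Finset (List V)} {w : List V}

noncomputable def occList (B : Finset (List V)) (w : List V) : List (ℕ × List V) :=
  (List.range w.length).flatMap fun i =>
    ((B.filter fun b => (w.drop i).take b.length = b).toList).map fun b => (i, b)

theorem mem_occList (hB : ∀ b ∈ B, b ≠ []) {p : ℕ × List V} :
    p ∈ occList B w ↔ IsOcc B w p := by
  simp only [occList, List.mem_flatMap, List.mem_range, List.mem_map, mem_toList, mem_filter]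
  constructor
  · rintro ⟨i, -, b, hb, rfl⟩
    exact hb
  · exact fun h => ⟨p.1, h.fst_lt hB, p.2, h, rfl⟩

theorem isMarking_occList (hB : ∀ b ∈ B, b ≠ []) (hanti : ∀ u ∈ B, ∀ v ∈ B, u <:+: v → u = v) :
    IsMarking B w (occList B w) := by
  refine ⟨fun p hp => (mem_occList hB).1 hp, List.pairwise_flatMap.2 ⟨fun i _ => ?_, ?_⟩⟩
  · refine ((nodup_toList _).map (Prod.mk_right_injective i)).pairwise_of_forall_ne ?_
    simp only [List.mem_map, mem_toList, mem_filter]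
    rintro _ ⟨b, hb, rfl⟩ _ ⟨b', hb', rfl⟩ hne
    exact absurd (IsOcc.eq_of_fst_eq (p := (i, b)) (q := (i, b')) hanti hb hb' rfl) hne
  · refine List.pairwise_lt_range.imp fun hij p hp q hq => ?_
    obtain ⟨_, -, rfl⟩ := List.mem_map.1 hp
    obtain ⟨_, -, rfl⟩ := List.mem_map.1 hq
    exact hij

noncomputable def markings (B : Finset (List V)) (w : List V) : Finset (List (ℕ × List V)) :=
  (occList B w).sublists.toFinset

theorem mem_markings (hB : ∀ b ∈ B, b ≠ []) (hanti : ∀ u ∈ B, ∀ v ∈ B, u <:+: v → u = v)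
    {L : List (ℕ × List V)} : L ∈ markings B w ↔ IsMarking B w L := by
  have hocc := isMarking_occList (w := w) hB hanti
  rw [markings, List.mem_toFinset, List.mem_sublists]
  refine ⟨fun h => ⟨fun p hp => hocc.1 p (h.subset hp), hocc.2.sublist h⟩, fun h => ?_⟩
  have : Std.Antisymm fun p q : ℕ × List V => p.1 < q.1 :=
    ⟨fun _ _ h h' => absurd h' (by omega)⟩
  exact List.sublist_of_subperm_of_pairwise
    (List.subperm_of_subset h.nodup fun p hp => (mem_occList hB).2 (h.1 p hp)) h.2 hocc.2

theorem sum_markings (hB : ∀ b ∈ B, b ≠ []) (hanti : ∀ u ∈ B, ∀ v ∈ B, u <:+: v → u = v) :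
    ∑ L ∈ markings B w, (X - 1 : ℤ[X]) ^ L.length = X ^ #(Occs B w) := by
  have hnodup : (occList B w).Nodup := (isMarking_occList hB hanti).nodup
  have hcard : (occList B w).length = #(Occs B w) := by
    rw [← List.toFinset_card_of_nodup hnodup]
    congr 1
    ext p
    rw [List.mem_toFinset, mem_occList hB, mem_occs hB]
  rw [markings, List.sum_toFinset _ (List.nodup_sublists.2 hnodup),
    List.sum_map_pow_length_sublists, sub_add_cancel, hcard]

end OccList


section SplitCluster

variable {V : Type*}

def Overlaps (p q : ℕ × List V) : Prop := q.1 < p.1 + p.2.length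

instance : DecidableRel (Overlaps (V := V)) := fun _ _ => Nat.decLt _ _

def splitCluster : List (ℕ × List V) → List (ℕ × List V) × List (ℕ × List V)
  | [] => ([], [])
  | [p] => ([p], [])
  | p :: q :: r =>
    if Overlaps p q then (p :: (splitCluster (q :: r)).1, (splitCluster (q :: r)).2)
    else ([p], q :: r)

def IsClusterSplit (K R : List (ℕ × List V)) : Prop :=
  K ≠ [] ∧ K.IsChain Overlaps ∧ ∀ p ∈ K.getLast?, ∀ q ∈ R.head?, ¬ Overlaps p q

theorem splitCluster_fst_append_snd :
    ∀ L : List (ℕ × List V), (splitCluster L).1 ++ (splitCluster L).2 = L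
  | [] => rfl
  | [_] => rfl
  | p :: q :: r => by
    rw [splitCluster]
    split_ifs
    · exact congrArg (p :: ·) (splitCluster_fst_append_snd (q :: r))
    · rfl

theorem isClusterSplit_splitCluster :
    ∀ {L : List (ℕ × List V)}, L ≠ [] →
      IsClusterSplit (splitCluster L).1 (splitCluster L).2
  | [], h => absurd rfl h
  | [_], _ => by simp [splitCluster, IsClusterSplit]
  | p :: q :: r, _ => by
    rw [splitCluster]
    split_ifs with hpq
    · obtain ⟨hne, hchain, hbd⟩ :=
        isClusterSplit_splitCluster (L := q :: r) (List.cons_ne_nil _ _)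
      have hhead : (splitCluster (q :: r)).1.head? = some q := by
        rw [← List.head?_append_of_ne_nil _ hne, splitCluster_fst_append_snd]
        rfl
      refine ⟨List.cons_ne_nil _ _, List.isChain_cons.2 ⟨?_, hchain⟩, ?_⟩
      · simpa [hhead] using hpq
      · rwa [List.getLast?_cons_of_ne_nil hne]
    · simp [IsClusterSplit, hpq]

theorem splitCluster_append :
    ∀ {K R : List (ℕ × List V)}, IsClusterSplit K R → splitCluster (K ++ R) = (K, R)
  | [], _, h => absurd rfl h.1
  | [_], [], _ => rfl
  | [p], q :: R, h => by simp [splitCluster, h.2.2 p rfl q rfl]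
  | p :: p' :: K, R, ⟨_, hchain, hbd⟩ => by
    obtain ⟨hpp', hchain⟩ := List.isChain_cons_cons.1 hchain
    rw [List.cons_append, List.cons_append, splitCluster, if_pos hpp', ← List.cons_append,
      splitCluster_append ⟨List.cons_ne_nil _ _, hchain, by simpa using hbd⟩]

end SplitCluster

def lastEnd {V : Type*} (K : List (ℕ × List V)) : ℕ :=
  ((K.map fun p => p.1 + p.2.length).getLast?).getD 0

section Decomposition

variable {V : Type*} {B : Finset (List V)} {w : List V} {K R L : List (ℕ × List V)}

theorem lastEnd_eq_of_ne_nil (h : K ≠ []) :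
    lastEnd K = (K.getLast h).1 + (K.getLast h).2.length := by
  simp [lastEnd, List.getLast?_map, List.getLast?_eq_some_getLast h]

theorem _root_.IsCluster.lastEnd_eq (h : IsCluster B w K) : lastEnd K = w.length := by
  simp [lastEnd, h.2.2.2.1]

theorem _root_.IsCluster.isClusterSplit_shiftMarks (h : IsCluster B w K)
    (R : List (ℕ × List V)) : IsClusterSplit K (shiftMarks w.length R) := by
  refine ⟨h.1, h.2.2.2.2.imp fun _ _ h => h.2.2, fun p hp q hq => ?_⟩
  have hend : p.1 + p.2.length = w.length := by
    simpa [List.getLast?_map, Option.mem_def.1 hp] using h.2.2.2.1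
  cases R with
  | nil => simp [shiftMarks] at hq
  | cons r R =>
    simp only [shiftMarks, List.map_cons, List.head?_cons, Option.mem_def, Option.some.injEq] at hq
    subst hq
    simp only [Overlaps]
    omega

theorem IsMarking.isCluster_take (hB : ∀ b ∈ B, b ≠ [])
    (hanti : ∀ u ∈ B, ∀ v ∈ B, u <:+: v → u = v) (hK : IsMarking B w K) (hne : K ≠ [])
    (hchain : K.IsChain Overlaps) (h0 : (K.map Prod.fst).head? = some 0) :
    lastEnd K ≤ w.length ∧ IsCluster B (w.take (lastEnd K)) K := by
  have hends := hK.pairwise_end_lt hanti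
  have hlast := lastEnd_eq_of_ne_nil hne
  have hle : ∀ p ∈ K, p.1 + p.2.length ≤ lastEnd K := fun p hp => by
    rcases hends.eq_or_rel_getLast hne hp with rfl | hlt <;> omega
  have hlen : lastEnd K ≤ w.length := hlast ▸ (hK.1 _ (List.getLast_mem hne)).end_le hB
  refine ⟨hlen, hne, fun p hp => (hK.1 p hp).take (hle p hp), h0, ?_, ?_⟩
  · simpa [List.getLast?_map, List.getLast?_eq_some_getLast hne, hlast] using hlast ▸ hlen
  · exact ((hK.2.isChain.and hends.isChain).and hchain).imp fun _ _ h => ⟨h.1.1, h.1.2, h.2⟩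

theorem IsMarking.le_fst_of_isClusterSplit (hK : IsMarking B w (K ++ R))
    (hsplit : IsClusterSplit K R) : ∀ p ∈ R, lastEnd K ≤ p.1 := by
  cases R with
  | nil => simp
  | cons r R =>
    have hr : lastEnd K ≤ r.1 := by
      have := hsplit.2.2 _ (List.getLast?_eq_some_getLast hsplit.1) r rfl
      rw [lastEnd_eq_of_ne_nil hsplit.1]
      simp only [Overlaps] at this
      omega
    intro p hp
    rcases List.mem_cons.1 hp with rfl | hp
    · exact hr
    · have := (List.pairwise_cons.1 (List.pairwise_append.1 hK.2).2.1).1 p hp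
      omega

theorem IsMarking.cluster_of_splitCluster (hB : ∀ b ∈ B, b ≠ [])
    (hanti : ∀ u ∈ B, ∀ v ∈ B, u <:+: v → u = v) (hL : IsMarking B w L)
    (h0 : ∃ p ∈ L, p.1 = 0) (hs : splitCluster L = (K, R)) :
    lastEnd K ≤ w.length ∧ IsCluster B (w.take (lastEnd K)) K ∧ IsMarking B w R ∧
      ∀ p ∈ R, lastEnd K ≤ p.1 := by
  have hsplit : IsClusterSplit K R := by
    simpa [hs] using isClusterSplit_splitCluster (L := L) (by rintro rfl; simp at h0)
  obtain rfl : K ++ R = L := by simpa [hs] using splitCluster_fst_append_snd L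
  obtain ⟨hKpw, hRpw, -⟩ := List.pairwise_append.1 hL.2
  have hK : IsMarking B w K := ⟨fun p hp => hL.1 p (List.mem_append_left _ hp), hKpw⟩
  have hhead : (K.map Prod.fst).head? = some 0 := by
    obtain ⟨k, K, rfl⟩ := List.exists_cons_of_ne_nil hsplit.1
    obtain ⟨p, hp, hp0⟩ := h0
    rcases List.mem_cons.1 hp with rfl | hp
    · simp [hp0]
    · have := (List.pairwise_cons.1 hL.2).1 p hp
      omega
  exact ⟨(hK.isCluster_take hB hanti hsplit.1 hsplit.2.1 hhead).1,
    (hK.isCluster_take hB hanti hsplit.1 hsplit.2.1 hhead).2,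
    ⟨fun p hp => hL.1 p (List.mem_append_right _ hp), hRpw⟩,
    hL.le_fst_of_isClusterSplit hsplit⟩

def cutCluster (q : MarkedWord V) : Σ _ : ℕ, MarkedWord V × MarkedWord V :=
  let K := (splitCluster q.2).1
  ⟨lastEnd K, (q.1.take (lastEnd K), K),
    (q.1.drop (lastEnd K), unshiftMarks (lastEnd K) (splitCluster q.2).2)⟩

def glueCluster (x : Σ _ : ℕ, MarkedWord V × MarkedWord V) : MarkedWord V :=
  (x.2.1.1 ++ x.2.2.1, x.2.1.2 ++ shiftMarks x.2.1.1.length x.2.2.2)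

theorem length_cutCluster_marks (q : MarkedWord V) :
    (cutCluster q).2.1.2.length + (cutCluster q).2.2.2.length = q.2.length := by
  rw [cutCluster, length_unshiftMarks, ← List.length_append, splitCluster_fst_append_snd]

theorem glueCluster_cutCluster (hB : ∀ b ∈ B, b ≠ [])
    (hanti : ∀ u ∈ B, ∀ v ∈ B, u <:+: v → u = v) {w : List V} {L : List (ℕ × List V)}
    (hL : IsMarking B w L) (h0 : ∃ p ∈ L, p.1 = 0) :
    glueCluster (cutCluster (w, L)) = (w, L) := by
  rcases hs : splitCluster L with ⟨K, R⟩
  obtain ⟨hlen, -, -, hRge⟩ := hL.cluster_of_splitCluster hB hanti h0 hs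
  simp only [cutCluster, glueCluster, hs, List.take_append_drop, List.length_take,
    min_eq_left hlen, shiftMarks_unshiftMarks hRge]
  simpa [hs] using splitCluster_fst_append_snd L

theorem _root_.IsCluster.exists_fst_eq_zero (h : IsCluster B w K) : ∃ p ∈ K, p.1 = 0 := by
  obtain ⟨k, K, rfl⟩ := List.exists_cons_of_ne_nil h.1
  exact ⟨k, List.mem_cons_self .., by simpa using h.2.2.1⟩

theorem cutCluster_glueCluster {u v : List V} {K R : List (ℕ × List V)}
    (hK : IsCluster B u K) :
    cutCluster (glueCluster ⟨u.length, (u, K), (v, R)⟩) = ⟨u.length, (u, K), (v, R)⟩ := by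
  simp only [glueCluster, cutCluster, splitCluster_append (hK.isClusterSplit_shiftMarks R),
    hK.lastEnd_eq, List.take_left' rfl, List.drop_left' rfl, unshiftMarks_shiftMarks]

end Decomposition

theorem sum_card_filter_mul {α R : Type*} [CommSemiring R] (s : Finset α) (g : α → ℕ)
    {t : Finset ℕ} (h : ∀ a ∈ s, g a ∈ t) (f : ℕ → R) :
    ∑ m ∈ t, (#{a ∈ s | g a = m} : R) * f m = ∑ a ∈ s, f (g a) := by
  rw [← sum_fiberwise_of_maps_to h]
  refine sum_congr rfl fun m _ => ?_
  rw [sum_congr rfl fun a ha => by rw [(mem_filter.1 ha).2], sum_const, nsmul_eq_mul]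

noncomputable def markWeight {V : Type*} (s : Finset (MarkedWord V)) : ℤ[X] :=
  ∑ q ∈ s, (X - 1) ^ q.2.length

theorem markWeight_filter_add_markWeight_filter_not {V : Type*}
    (s : Finset (MarkedWord V)) (P : MarkedWord V → Prop)
    [DecidablePred P] : markWeight {q ∈ s | P q} + markWeight {q ∈ s | ¬P q} = markWeight s :=
  sum_filter_add_sum_filter_not _ _ _

section MarkedWords

variable {V : Type*} [Fintype V] [DecidableEq V] {B : Finset (List V)} {n : ℕ}

def words (V : Type*) [Fintype V] [DecidableEq V] (n : ℕ) : Finset (List V) :=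
  univ.image (List.ofFn : (Fin n → V) → List V)

theorem mem_words {w : List V} : w ∈ words V n ↔ w.length = n := by
  simp only [words, mem_image, mem_univ, true_and]
  constructor
  · rintro ⟨f, rfl⟩
    exact List.length_ofFn
  · rintro rfl
    exact ⟨w.get, List.ofFn_get w⟩

noncomputable def markedWords (B : Finset (List V)) (n : ℕ) : Finset (MarkedWord V) :=
  ((words V n).sigma (markings B)).map (Equiv.sigmaEquivProd _ _).toEmbedding

noncomputable instance (B : Finset (List V)) (w : List V) : DecidablePred (IsCluster B w) :=
  fun _ => Classical.dec _

noncomputable def clusterWords (B : Finset (List V)) (n : ℕ) : Finset (MarkedWord V) :=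
  {q ∈ markedWords B n | IsCluster B q.1 q.2}

theorem mem_markedWords (hB : ∀ b ∈ B, b ≠ []) (hanti : ∀ u ∈ B, ∀ v ∈ B, u <:+: v → u = v)
    {q : MarkedWord V} :
    q ∈ markedWords B n ↔ q.1.length = n ∧ IsMarking B q.1 q.2 := by
  simp [markedWords, mem_map_equiv, mem_words, mem_markings hB hanti]

theorem mem_clusterWords (hB : ∀ b ∈ B, b ≠ []) (hanti : ∀ u ∈ B, ∀ v ∈ B, u <:+: v → u = v)
    {q : MarkedWord V} :
    q ∈ clusterWords B n ↔ q.1.length = n ∧ IsCluster B q.1 q.2 := by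
  rw [clusterWords, mem_filter, mem_markedWords hB hanti]
  exact ⟨fun h => ⟨h.1.1, h.2⟩, fun h => ⟨⟨h.1, h.2.isMarking⟩, h.2⟩⟩

theorem markWeight_markedWords (hB : ∀ b ∈ B, b ≠ [])
    (hanti : ∀ u ∈ B, ∀ v ∈ B, u <:+: v → u = v) (n : ℕ) :
    markWeight (markedWords B n) = ∑ w ∈ words V n, X ^ #(Occs B w) := by
  rw [markWeight, markedWords, sum_map, sum_sigma]
  exact sum_congr rfl fun w _ => sum_markings hB hanti

theorem coeff_occGF (hB : ∀ b ∈ B, b ≠ []) (hanti : ∀ u ∈ B, ∀ v ∈ B, u <:+: v → u = v)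
    (n : ℕ) : PowerSeries.coeff n (occGF B) = markWeight (markedWords B n) := by
  have hbound (f : Fin n → V) (_ : f ∈ univ) :
      #(Occs B (List.ofFn f)) ∈ range ((n + 1) * #B + 1) := by
    refine mem_range.2 (Nat.lt_succ_of_le ?_)
    calc #(Occs B (List.ofFn f)) ≤ #(range ((List.ofFn f).length + 1) ×ˢ B) :=
          card_filter_le _ _
      _ = (n + 1) * #B := by simp
  have hcount (m : ℕ) :
      occCount B n m = #{f : Fin n → V | #(Occs B (List.ofFn f)) = m} := by
    rw [occCount, Nat.card_eq_fintype_card, Fintype.card_subtype]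
  rw [occGF, PowerSeries.coeff_mk, markWeight_markedWords hB hanti, words,
    sum_image fun f _ g _ h => List.ofFn_injective h, ← sum_card_filter_mul _ _ hbound]
  simp only [hcount]

theorem clusterCount_eq (hB : ∀ b ∈ B, b ≠ []) (hanti : ∀ u ∈ B, ∀ v ∈ B, u <:+: v → u = v)
    (n l : ℕ) : clusterCount B n l = #{q ∈ clusterWords B n | q.2.length = l} := by
  rw [clusterCount, ← Nat.card_eq_finsetCard]
  refine Nat.card_eq_of_bijective (fun q => ⟨(List.ofFn q.1.1, q.1.2), ?_⟩) ⟨?_, ?_⟩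
  · simpa [mem_clusterWords hB hanti] using q.2
  · rintro ⟨⟨f, L⟩, _⟩ ⟨⟨f', L'⟩, _⟩ h
    simp only [Subtype.mk.injEq, Prod.mk.injEq] at h
    simp [List.ofFn_injective h.1, h.2]
  · rintro ⟨⟨w, L⟩, hq⟩
    obtain ⟨⟨hw, hL⟩, hl⟩ := by simpa [mem_clusterWords hB hanti] using hq
    subst hw
    exact ⟨⟨(w.get, L), by simpa [List.ofFn_get] using ⟨hL, hl⟩⟩,
      by simp [List.ofFn_get]⟩

theorem coeff_clusterGFT (hB : ∀ b ∈ B, b ≠ []) (hanti : ∀ u ∈ B, ∀ v ∈ B, u <:+: v → u = v)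
    (n : ℕ) : PowerSeries.coeff n (clusterGFT B) = markWeight (clusterWords B n) := by
  have hbound (q) (hq : q ∈ clusterWords B n) : q.2.length ∈ range (n + 1) := by
    obtain ⟨hlen, hq⟩ := (mem_clusterWords hB hanti).1 hq
    exact mem_range.2 (Nat.lt_succ_of_le (hlen ▸ hq.isMarking.length_le hB))
  rw [clusterGFT, PowerSeries.coeff_mk, markWeight, ← sum_card_filter_mul _ _ hbound]
  simp only [clusterCount_eq hB hanti, mul_comm]

end MarkedWords

section Recurrence

variable {V : Type*} [Fintype V] [DecidableEq V] {B : Finset (List V)}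

theorem cutCluster_mem (hB : ∀ b ∈ B, b ≠ []) (hanti : ∀ u ∈ B, ∀ v ∈ B, u <:+: v → u = v)
    {w : List V} {L : List (ℕ × List V)} (hL : IsMarking B w L) (h0 : ∃ p ∈ L, p.1 = 0) :
    cutCluster (w, L) ∈ (range (w.length + 1)).sigma fun j =>
      clusterWords B j ×ˢ markedWords B (w.length - j) := by
  rcases hs : splitCluster L with ⟨K, R⟩
  obtain ⟨hlen, hK, hR, hRge⟩ := hL.cluster_of_splitCluster hB hanti h0 hs
  simp only [cutCluster, hs, mem_sigma, mem_range, mem_product, mem_clusterWords hB hanti,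
    mem_markedWords hB hanti, List.length_take, List.length_drop, min_eq_left hlen]
  exact ⟨by omega, ⟨trivial, hK⟩, trivial, hR.drop hRge⟩

theorem markWeight_filter_startMarked (hB : ∀ b ∈ B, b ≠ [])
    (hanti : ∀ u ∈ B, ∀ v ∈ B, u <:+: v → u = v) (n : ℕ) :
    markWeight {q ∈ markedWords B n | ∃ p ∈ q.2, p.1 = 0} =
      ∑ j ∈ range (n + 1),
        markWeight (clusterWords B j) * markWeight (markedWords B (n - j)) := by
  have hprod : ∑ j ∈ range (n + 1), markWeight (clusterWords B j) *
      markWeight (markedWords B (n - j)) =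
        ∑ x ∈ (range (n + 1)).sigma fun j => clusterWords B j ×ˢ markedWords B (n - j),
          (X - 1) ^ (x.2.1.2.length + x.2.2.2.length) := by
    simp only [sum_sigma, markWeight, sum_mul_sum, sum_product, pow_add]
  have hsource {w : List V} {L : List (ℕ × List V)}
      (hq : (w, L) ∈ {q ∈ markedWords B n | ∃ p ∈ q.2, p.1 = 0}) :
      w.length = n ∧ IsMarking B w L ∧ ∃ p ∈ L, p.1 = 0 := by
    simpa [mem_markedWords hB hanti, and_assoc] using hq
  have htarget {j : ℕ} {u v : List V} {K R : List (ℕ × List V)}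
      (hx : ⟨j, (u, K), (v, R)⟩ ∈ (range (n + 1)).sigma fun j =>
        clusterWords B j ×ˢ markedWords B (n - j)) :
      j < n + 1 ∧ (u.length = j ∧ IsCluster B u K) ∧
        v.length = n - j ∧ IsMarking B v R := by
    simpa [mem_clusterWords hB hanti, mem_markedWords hB hanti] using hx
  rw [hprod, markWeight]
  refine sum_nbij' cutCluster glueCluster ?_ ?_ ?_ ?_ fun q _ => by rw [length_cutCluster_marks]
  · rintro ⟨w, L⟩ hq
    obtain ⟨rfl, hL, h0⟩ := hsource hq
    exact cutCluster_mem hB hanti hL h0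
  · rintro ⟨j, ⟨u, K⟩, ⟨v, R⟩⟩ hx
    obtain ⟨hj, ⟨rfl, hK⟩, hv, hR⟩ := htarget hx
    obtain ⟨p, hp, hp0⟩ := hK.exists_fst_eq_zero
    refine mem_filter.2 ⟨(mem_markedWords hB hanti).2 ⟨?_, hK.isMarking.append hB hR⟩,
      p, List.mem_append_left _ hp, hp0⟩
    simp only [glueCluster, List.length_append]
    omega
  · rintro ⟨w, L⟩ hq
    obtain ⟨-, hL, h0⟩ := hsource hq
    exact glueCluster_cutCluster hB hanti hL h0
  · rintro ⟨j, ⟨u, K⟩, ⟨v, R⟩⟩ hx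
    obtain ⟨-, ⟨rfl, hK⟩, -⟩ := htarget hx
    exact cutCluster_glueCluster hK

theorem markWeight_filter_not_startMarked_succ (hB : ∀ b ∈ B, b ≠ [])
    (hanti : ∀ u ∈ B, ∀ v ∈ B, u <:+: v → u = v) (n : ℕ) :
    markWeight {q ∈ markedWords B (n + 1) | ¬∃ p ∈ q.2, p.1 = 0} =
      Fintype.card V * markWeight (markedWords B n) := by
  have hprod : Fintype.card V * markWeight (markedWords B n) =
      ∑ x ∈ (univ : Finset V) ×ˢ markedWords B n, (X - 1 : ℤ[X]) ^ x.2.2.length := by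
    simp [sum_product, markWeight]
  rw [hprod, markWeight]
  symm
  refine sum_nbij (fun x => (x.1 :: x.2.1, shiftMarks 1 x.2.2)) ?_ ?_ ?_ ?_
  · rintro ⟨a, w, L⟩ hx
    obtain ⟨hw, hL⟩ := (mem_markedWords hB hanti).1 (mem_product.1 hx).2
    simp only [mem_filter, mem_markedWords hB hanti, List.length_cons, hw, shiftMarks,
      List.mem_map]
    exact ⟨⟨trivial, (show IsMarking B [a] [] from ⟨by simp, by simp⟩).append hB hL⟩,
      by rintro ⟨_, ⟨p, -, rfl⟩, h⟩; simp at h⟩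
  · rintro ⟨a, w, L⟩ - ⟨a', w', L'⟩ - h
    simp only [Prod.mk.injEq, List.cons.injEq] at h
    simpa [h.1.1, h.1.2] using congrArg (unshiftMarks 1) h.2
  · rintro ⟨w, L⟩ hq
    obtain ⟨hq, h0⟩ := mem_filter.1 hq
    obtain ⟨hw, hL⟩ := (mem_markedWords hB hanti).1 hq
    obtain ⟨a, w, rfl⟩ := List.exists_cons_of_length_eq_add_one hw
    have hpos : ∀ p ∈ L, 1 ≤ p.1 :=
      fun p hp => Nat.one_le_iff_ne_zero.2 fun h => h0 ⟨p, hp, h⟩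
    refine ⟨(a, w, unshiftMarks 1 L), mem_product.2 ⟨mem_univ _, ?_⟩, ?_⟩
    · exact (mem_markedWords hB hanti).2 ⟨by simpa using hw, hL.drop hpos⟩
    · simp [shiftMarks_unshiftMarks hpos]
  · intro x _
    simp

theorem markedWords_zero : markedWords B 0 = {([], [])} := by
  have hwords : words V 0 = {[]} := by
    ext w
    simp [mem_words]
  have hmarkings : markings B [] = {[]} := by
    simp [markings, occList]
  ext ⟨w, L⟩
  simp only [markedWords, mem_map_equiv, mem_sigma, hwords, mem_singleton]
  constructor
  · rintro ⟨rfl, hL⟩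
    simpa [hmarkings] using hL
  · simp_all

theorem occGF_eq (hB : ∀ b ∈ B, b ≠ []) (hanti : ∀ u ∈ B, ∀ v ∈ B, u <:+: v → u = v) :
    occGF B = 1 + ((Fintype.card V : PowerSeries ℤ[X]) * PowerSeries.X + clusterGFT B) *
      occGF B := by
  refine PowerSeries.ext fun n => ?_
  rw [coeff_occGF hB hanti, ← markWeight_filter_add_markWeight_filter_not _
      fun q => ∃ p ∈ q.2, p.1 = 0, markWeight_filter_startMarked hB hanti, add_mul, map_add,
    map_add, PowerSeries.coeff_mul n (clusterGFT B), Finset.Nat.sum_antidiagonal_eq_sum_range_succ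
      (fun i j => PowerSeries.coeff i (clusterGFT B) * PowerSeries.coeff j (occGF B))]
  simp only [coeff_clusterGFT hB hanti, coeff_occGF hB hanti]
  rcases n with _ | n
  · rw [markedWords_zero, filter_singleton, if_pos (by simp)]
    simp [markWeight, add_comm]
  · rw [markWeight_filter_not_startMarked_succ hB hanti, mul_assoc, ← map_natCast PowerSeries.C,
      PowerSeries.coeff_C_mul, PowerSeries.coeff_succ_X_mul, coeff_occGF hB hanti]
    simp [add_comm]

end Recurrence

end GouldenJackson

/-- Goulden–Jackson with a counter `t` for occurrences:
`(1 - d·s - C(s,t)) · F(s,t) = 1`. -/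
theorem stmt7 {V : Type*} [Fintype V] [DecidableEq V]
    (d : ℕ) (hd : Fintype.card V = d)
    (B : Finset (List V)) (hB : ∀ b ∈ B, b ≠ [])
    (hanti : ∀ u ∈ B, ∀ v ∈ B, u <:+: v → u = v) :
    (1 - (d : PowerSeries (Polynomial ℤ)) * PowerSeries.X - clusterGFT B) *
      occGF B = 1 := by
  subst hd
  linear_combination GouldenJackson.occGF_eq hB hanti
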